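/- Fix an integer n ≥ 4 and a real number r0 > 0, define b : (r0, ∞) → ℝ by b(s) = r0 · ∫_{s/r0}^∞ (t^{2n−4} − 1)^{−1/2} dt, and define Υ : {x ∈ ℝⁿ : ‖x‖ > r0} → ℝ by Υ(x) = b(‖x‖). Let q assign to each x with ‖x‖ > r0 a symmetric n×n real matrix q(x) satisfying n · ‖q(x)‖ < r0^{n−2} · ‖x‖^{1−n}, where ‖q(x)‖ is the Frobenius norm. Then for every real λ with |λ| ≤ 1 and every x with ‖x‖ > r0, writing p for the gradient of Υ at x and H for the Hessian matrix of Υ at x, one has Σ_{i,j} (δ_{ij} − (1 + ‖p‖²)^{−1} p_i p_j) · ((1 + ‖p‖²)^{−1/2} H_{ij} − λ·q(x)_{ij}) < 0. In particular, Υ is a strict supersolution of the Jang equation with data ±q on the exterior region {‖x‖ > r0} in Euclidean space. -/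

import Mathlib

/-
For a radial function `b(‖x‖)` with gradient `p` and Hessian `H`, the trace
`(1 + |p|²)^{-1/2} g^{ij} H_{ij}` (the mean curvature of its graph) equals
`ψ' + (n - 1) ψ / s` at `s = ‖x‖`, where `ψ = b' / √(1 + b'²)`. The profile `b` is chosen
precisely so that `ψ(s) = -(r0 / s)^{n-2}`, which makes this curvature equal to
`-r0^{n-2} s^{1-n}`. The eigenvalues of `g^{ij}` are `1` and `(1 + |p|²)⁻¹`, so `|g^{ij}|_F ≤ √n`
and by Cauchy–Schwarz the data term `λ g^{ij} q_{ij}` is at most `√n ‖q‖_F < r0^{n-2} s^{1-n}`.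
-/

/-- The Schoen-Yau/Eichmair barrier profile
`b(s) = r0 · ∫_{s/r0}^∞ (t^{2n-4} - 1)^{-1/2} dt`. -/
noncomputable def jangB (n : ℕ) (r0 : ℝ) (s : ℝ) : ℝ :=
  r0 * ∫ t in Set.Ioi (s / r0), (t ^ (2 * n - 4) - 1) ^ (-(1 / 2) : ℝ)

/-- The partial derivative of `f : ℝⁿ → ℝ` in the `i`-th coordinate direction. -/
noncomputable def pder {n : ℕ} (f : EuclideanSpace ℝ (Fin n) → ℝ) (i : Fin n)
    (x : EuclideanSpace ℝ (Fin n)) : ℝ :=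
  fderiv ℝ f x (EuclideanSpace.single i 1)

open Set MeasureTheory Real Filter Topology

theorem hasDerivAt_integral_Ioi {E : Type*} [NormedAddCommGroup E] [NormedSpace ℝ E]
    [CompleteSpace E] {f : ℝ → E} {a s : ℝ} (hf : IntegrableOn f (Ioi a)) (has : a < s)
    (hcont : ContinuousAt f s) :
    HasDerivAt (fun u => ∫ t in Ioi u, f t) (-f s) s := by
  have hint : IntervalIntegrable f volume a s :=
    (intervalIntegrable_iff_integrableOn_Ioc_of_le has.le).2 (hf.mono_set Ioc_subset_Ioi_self)
  have hmeas : StronglyMeasurableAtFilter f (𝓝 s) :=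
    AEStronglyMeasurable.stronglyMeasurableAtFilter_of_mem hf.aestronglyMeasurable
      (Ioi_mem_nhds has)
  refine ((intervalIntegral.integral_hasDerivAt_right hint hmeas hcont).const_sub
    (∫ t in Ioi a, f t)).congr_of_eventuallyEq ?_
  filter_upwards [Ioi_mem_nhds has] with u hu
  rw [← intervalIntegral.integral_Ioi_sub_Ioi hf hu.le, sub_sub_cancel]

theorem continuousAt_pow_sub_one_rpow {m : ℕ} (hm : 1 ≤ m) {p t : ℝ} (ht : 1 < t) :
    ContinuousAt (fun u : ℝ => (u ^ m - 1) ^ p) t := by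
  have : 0 < t ^ m - 1 := sub_pos.2 (one_lt_pow₀ ht (by omega))
  exact ((continuous_pow m).continuousAt.sub continuousAt_const).rpow_const (.inl this.ne')

theorem integrableOn_Ioi_pow_sub_one_rpow_neg_half {m : ℕ} (hm : 3 ≤ m) {a : ℝ} (ha : 1 < a) :
    IntegrableOn (fun t : ℝ => (t ^ m - 1) ^ (-(1 / 2) : ℝ)) (Ioi a) := by
  have ha0 : 0 < a := one_pos.trans ha
  set c : ℝ := 1 - (a ^ m)⁻¹
  have hc : 0 < c := sub_pos.2 (inv_lt_one_of_one_lt₀ (one_lt_pow₀ ha (by omega)))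
  have hbound : ∀ t ∈ Ioi a,
      ‖(t ^ m - 1) ^ (-(1 / 2) : ℝ)‖ ≤ c ^ (-(1 / 2) : ℝ) * t ^ (-(m / 2 : ℝ)) := by
    intro t (ht : a < t)
    have ht0 : 0 < t := ha0.trans ht
    have hle : c * t ^ m ≤ t ^ m - 1 := by
      have : (a ^ m)⁻¹ * t ^ m ≥ 1 := by
        rw [ge_iff_le, inv_mul_eq_div, one_le_div (by positivity)]
        exact pow_le_pow_left₀ ha0.le ht.le m
      nlinarith
    rw [norm_of_nonneg (rpow_nonneg ((mul_pos hc (pow_pos ht0 m)).le.trans hle) _)]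
    calc (t ^ m - 1) ^ (-(1 / 2) : ℝ) ≤ (c * t ^ m) ^ (-(1 / 2) : ℝ) :=
          rpow_le_rpow_of_nonpos (by positivity) hle (by norm_num)
      _ = c ^ (-(1 / 2) : ℝ) * t ^ (-(m / 2 : ℝ)) := by
          rw [mul_rpow hc.le (by positivity), ← rpow_natCast, ← rpow_mul ht0.le]
          ring_nf
  refine Integrable.mono' ((integrableOn_Ioi_rpow_of_lt ?_ ha0).const_mul _) ?_
    ((ae_restrict_iff' measurableSet_Ioi).2 (ae_of_all _ hbound))
  · have : (3 : ℝ) ≤ m := by exact_mod_cast hm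
    linarith
  · exact ContinuousOn.aestronglyMeasurable (fun t ht =>
      (continuousAt_pow_sub_one_rpow (by omega) (ha.trans ht)).continuousWithinAt)
      measurableSet_Ioi

noncomputable def jangSlope (n : ℕ) (r0 s : ℝ) : ℝ :=
  -((s / r0) ^ (2 * n - 4) - 1) ^ (-(1 / 2) : ℝ)

theorem differentiableAt_jangSlope {n : ℕ} (hn : 3 ≤ n) {r0 s : ℝ} (hr0 : 0 < r0)
    (hs : r0 < s) : DifferentiableAt ℝ (jangSlope n r0) s := by
  have : 0 < (s / r0) ^ (2 * n - 4) - 1 :=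
    sub_pos.2 (one_lt_pow₀ ((one_lt_div hr0).2 hs) (by omega))
  unfold jangSlope
  fun_prop (disch := exact Or.inl this.ne')

theorem jangSlope_div_sqrt {n : ℕ} (hn : 3 ≤ n) {r0 s : ℝ} (hr0 : 0 < r0) (hs : r0 < s) :
    jangSlope n r0 s / √(1 + jangSlope n r0 s ^ 2)
      = -(r0 ^ ((n : ℝ) - 2) * s ^ ((2 : ℝ) - n)) := by
  have hs0 : 0 < s := hr0.trans hs
  set w := (s / r0) ^ (n - 2) with hw
  have hw1 : 1 < w := one_lt_pow₀ ((one_lt_div hr0).2 hs) (by omega)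
  have hA : (s / r0) ^ (2 * n - 4) - 1 = w ^ 2 - 1 := by
    rw [hw, ← pow_mul]; congr 2; omega
  have hA0 : 0 < w ^ 2 - 1 := by nlinarith
  have hslope : jangSlope n r0 s = -(√(w ^ 2 - 1))⁻¹ := by
    rw [jangSlope, hA, sqrt_eq_rpow, ← rpow_neg hA0.le]
  have hone : 1 + jangSlope n r0 s ^ 2 = w ^ 2 / (w ^ 2 - 1) := by
    rw [hslope, neg_sq, inv_pow, sq_sqrt hA0.le]; field_simp; ring
  have hpow : r0 ^ ((n : ℝ) - 2) * s ^ ((2 : ℝ) - n) = w⁻¹ := by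
    have e1 : (n : ℝ) - 2 = ((n - 2 : ℕ) : ℝ) := by push_cast [show 2 ≤ n by omega]; ring
    have e2 : (2 : ℝ) - n = -((n - 2 : ℕ) : ℝ) := by rw [← e1]; ring
    rw [e1, e2, rpow_neg hs0.le, rpow_natCast, rpow_natCast, hw, div_pow, inv_div,
      div_eq_mul_inv]
  rw [hone, hslope, hpow, sqrt_div' _ hA0.le, sqrt_sq (by positivity)]
  field_simp

theorem hasDerivAt_jangB {n : ℕ} (hn : 4 ≤ n) {r0 s : ℝ} (hr0 : 0 < r0) (hs : r0 < s) :
    HasDerivAt (jangB n r0) (jangSlope n r0 s) s := by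
  have hu : 1 < s / r0 := (one_lt_div hr0).2 hs
  have htail := hasDerivAt_integral_Ioi
    (integrableOn_Ioi_pow_sub_one_rpow_neg_half (m := 2 * n - 4) (by omega)
      (show 1 < (1 + s / r0) / 2 by linarith)) (by linarith)
    (continuousAt_pow_sub_one_rpow (by omega) hu)
  refine ((htail.comp s ((hasDerivAt_id s).div_const r0)).const_mul r0).congr_deriv ?_
  rw [jangSlope]
  field_simp

theorem HasDerivAt.div_sqrt_one_add_sq {g : ℝ → ℝ} {g' s : ℝ} (hg : HasDerivAt g g' s) :
    HasDerivAt (fun t => g t / √(1 + g t ^ 2)) (g' / ((1 + g s ^ 2) * √(1 + g s ^ 2))) s := by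
  have hpos : 0 < 1 + g s ^ 2 := by positivity
  have hsqrt := (hg.pow 2).const_add 1 |>.sqrt hpos.ne'
  refine (hg.div hsqrt (sqrt_pos.2 hpos).ne').congr_deriv ?_
  simp only [Pi.pow_apply]
  field_simp
  rw [sq_sqrt hpos.le]
  ring

theorem jangSlope_mean_curvature {n : ℕ} (hn : 3 ≤ n) {r0 s : ℝ} (hr0 : 0 < r0) (hs : r0 < s) :
    deriv (jangSlope n r0) s / ((1 + jangSlope n r0 s ^ 2) * √(1 + jangSlope n r0 s ^ 2))
      + (n - 1) * (jangSlope n r0 s / √(1 + jangSlope n r0 s ^ 2)) / s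
      = -(r0 ^ ((n : ℝ) - 2) * s ^ ((1 : ℝ) - n)) := by
  have hs0 : 0 < s := hr0.trans hs
  have hψ : HasDerivAt (fun t => -(r0 ^ ((n : ℝ) - 2) * t ^ ((2 : ℝ) - n)))
      (-(r0 ^ ((n : ℝ) - 2) * (((2 : ℝ) - n) * s ^ ((2 : ℝ) - n - 1)))) s :=
    ((hasDerivAt_rpow_const (.inl hs0.ne')).const_mul _).neg
  have hψ' := (differentiableAt_jangSlope hn hr0 hs).hasDerivAt.div_sqrt_one_add_sq
  rw [← hψ.unique (hψ'.congr_of_eventuallyEq ?_), jangSlope_div_sqrt hn hr0 hs,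
    rpow_sub_one hs0.ne', show (1 : ℝ) - n = 2 - n - 1 by ring, rpow_sub_one hs0.ne']
  · ring
  · filter_upwards [Ioi_mem_nhds hs] with t ht using (jangSlope_div_sqrt hn hr0 ht).symm

theorem hasFDerivAt_norm {E : Type*} [NormedAddCommGroup E] [InnerProductSpace ℝ E] {x : E}
    (hx : x ≠ 0) : HasFDerivAt (fun y : E => ‖y‖) (‖x‖⁻¹ • innerSL ℝ x) x := by
  have hsq := (hasDerivAt_sqrt (pow_pos (norm_pos_iff.2 hx) 2).ne').comp_hasFDerivAt x
    (hasStrictFDerivAt_norm_sq x).hasFDerivAt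
  simp only [Function.comp_def, sqrt_sq (norm_nonneg _)] at hsq
  refine hsq.congr_fderiv ?_
  ext v
  simp only [smul_apply, coe_innerSL_apply, smul_eq_mul, nsmul_eq_mul, Nat.cast_ofNat]
  field_simp

section Radial

variable {n : ℕ} {h : ℝ → ℝ} {x : EuclideanSpace ℝ (Fin n)}

theorem pder_comp_norm {h' : ℝ} (hx : x ≠ 0) (hh : HasDerivAt h h' ‖x‖) (i : Fin n) :
    pder (fun y => h ‖y‖) i x = h' / ‖x‖ * x i := by
  have hd : HasFDerivAt (fun y => h ‖y‖) _ x := hh.comp_hasFDerivAt x (hasFDerivAt_norm hx)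
  rw [pder, hd.fderiv]
  simp only [smul_apply, coe_innerSL_apply, EuclideanSpace.inner_single_right, conj_trivial,
    smul_eq_mul]
  ring

theorem pder_pder_comp_norm {h' : ℝ → ℝ} {h'' : ℝ} (hx : x ≠ 0)
    (hh : ∀ᶠ t in 𝓝 ‖x‖, HasDerivAt h (h' t) t) (hh' : HasDerivAt h' h'' ‖x‖) (i j : Fin n) :
    pder (pder (fun y => h ‖y‖) j) i x
      = (h'' / ‖x‖ ^ 2 - h' ‖x‖ / ‖x‖ ^ 3) * x i * x j
        + h' ‖x‖ / ‖x‖ * (if i = j then 1 else 0) := by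
  have hgrad : pder (fun y => h ‖y‖) j =ᶠ[𝓝 x] fun y => h' ‖y‖ / ‖y‖ * y j := by
    filter_upwards [(continuous_norm.tendsto x).eventually hh, eventually_ne_nhds hx]
      with y hy hy0 using pder_comp_norm hy0 hy j
  have hx0 : ‖x‖ ≠ 0 := norm_ne_zero_iff.2 hx
  have hk : HasFDerivAt (fun y => h' ‖y‖ / ‖y‖ * y j) _ x :=
    ((hh'.div (hasDerivAt_id _) hx0).comp_hasFDerivAt x (hasFDerivAt_norm hx)).mul
      (EuclideanSpace.proj j : EuclideanSpace ℝ (Fin n) →L[ℝ] ℝ).hasFDerivAt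
  rw [pder, hgrad.fderiv_eq, hk.fderiv]
  simp only [add_apply, smul_apply, PiLp.proj_apply, coe_innerSL_apply,
    EuclideanSpace.inner_single_right, Function.comp_apply, Pi.div_apply, id_eq, conj_trivial,
    smul_eq_mul]
  rcases eq_or_ne i j with rfl | hij
  · simp only [PiLp.single_eq_same, if_pos]
    field_simp
    ring
  · simp only [PiLp.single_eq_of_ne' _ hij, if_neg hij]
    field_simp
    ring

end Radial

section GraphInvMetric

open Finset

variable {n : ℕ}

/-- The inverse `g^{ij}` of the metric `δ_{ij} + p_i p_j` induced on the graph of a function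
with gradient `p`. -/
noncomputable def graphInvMetric (p : Fin n → ℝ) (i j : Fin n) : ℝ :=
  (if i = j then 1 else 0) - (1 + ∑ k, p k ^ 2)⁻¹ * p i * p j

theorem sum_graphInvMetric_sq_le (p : Fin n → ℝ) :
    ∑ i, ∑ j, graphInvMetric p i j ^ 2 ≤ n := by
  unfold graphInvMetric
  set P := ∑ k, p k ^ 2
  set c := (1 + P)⁻¹
  have expand : ∀ i j, ((if i = j then 1 else 0) - c * p i * p j) ^ 2
      = (if i = j then 1 - 2 * c * p i ^ 2 else 0) + c ^ 2 * (p i ^ 2 * p j ^ 2) := by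
    intro i j
    rcases eq_or_ne i j with rfl | hij
    · simp only [if_pos]; ring
    · simp only [if_neg hij]; ring
  simp only [expand, sum_add_distrib, sum_ite_eq, Finset.mem_univ, if_true, ← mul_sum,
    ← sum_mul, sum_sub_distrib, sum_const, card_univ, Fintype.card_fin, nsmul_eq_mul, mul_one]
  have hcP : c * P ≤ 1 := by
    rw [inv_mul_le_one₀ (by positivity)]; linarith
  nlinarith [mul_nonneg (inv_nonneg.2 (by positivity : (0 : ℝ) ≤ 1 + P)) (by positivity : 0 ≤ P)]

theorem abs_sum_graphInvMetric_mul_le (p : Fin n → ℝ) (q : Fin n → Fin n → ℝ) :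
    |∑ i, ∑ j, graphInvMetric p i j * q i j| ≤ √n * √(∑ i, ∑ j, q i j ^ 2) := by
  have hCS := sum_mul_sq_le_sq_mul_sq (univ : Finset (Fin n × Fin n))
    (fun ij => graphInvMetric p ij.1 ij.2) (fun ij => q ij.1 ij.2)
  simp only [Fintype.sum_prod_type] at hCS
  calc |∑ i, ∑ j, graphInvMetric p i j * q i j|
      ≤ √(∑ i, ∑ j, graphInvMetric p i j ^ 2) * √(∑ i, ∑ j, q i j ^ 2) := by
        rw [← sqrt_mul (by positivity)]
        exact abs_le_sqrt hCS
    _ ≤ √n * √(∑ i, ∑ j, q i j ^ 2) := by gcongr; exact sum_graphInvMetric_sq_le p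

theorem sum_graphInvMetric_mul_radial_hessian (x : Fin n → ℝ) {s g g' : ℝ} (hs : s ≠ 0)
    (hx : ∑ i, x i ^ 2 = s ^ 2) :
    ∑ i, ∑ j, graphInvMetric (fun k => g / s * x k) i j
        * ((g' / s ^ 2 - g / s ^ 3) * x i * x j + g / s * (if i = j then 1 else 0))
      = g' / (1 + g ^ 2) + (n - 1) * g / s := by
  have hP : ∑ k, (g / s * x k) ^ 2 = g ^ 2 := by
    simp only [mul_pow, ← mul_sum, hx]; field_simp
  unfold graphInvMetric
  simp only [hP]
  set c := (1 + g ^ 2)⁻¹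
  set k := g / s
  set β := g' / s ^ 2 - g / s ^ 3
  have expand : ∀ i j, ((if i = j then 1 else 0) - c * (k * x i) * (k * x j))
        * (β * x i * x j + k * (if i = j then 1 else 0))
      = (if i = j then β * x i ^ 2 + k - c * k ^ 3 * x i ^ 2 else 0)
        - c * k ^ 2 * β * (x i ^ 2 * x j ^ 2) := by
    intro i j
    rcases eq_or_ne i j with rfl | hij
    · simp only [if_pos]; ring
    · simp only [if_neg hij]; ring
  simp only [expand, sum_sub_distrib, sum_ite_eq, Finset.mem_univ, if_true, ← mul_sum,
    ← sum_mul, sum_add_distrib, sum_const, card_univ, Fintype.card_fin, nsmul_eq_mul, hx]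
  simp only [c, k, β]
  field_simp
  ring

end GraphInvMetric

theorem barrier_graph_mean_curvature {n : ℕ} (hn : 4 ≤ n) {r0 : ℝ} (hr0 : 0 < r0)
    {x : EuclideanSpace ℝ (Fin n)} (hx : r0 < ‖x‖)
    {p : Fin n → ℝ} (hp : ∀ i, p i = pder (fun y => jangB n r0 ‖y‖) i x)
    {H : Fin n → Fin n → ℝ} (hH : ∀ i j, H i j = pder (pder (fun y => jangB n r0 ‖y‖) j) i x) :
    (1 + ∑ k, p k ^ 2) ^ (-(1 / 2) : ℝ) * ∑ i, ∑ j, graphInvMetric p i j * H i j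
      = -(r0 ^ ((n : ℝ) - 2) * ‖x‖ ^ ((1 : ℝ) - n)) := by
  set g := jangSlope n r0 ‖x‖
  have hs0 : ‖x‖ ≠ 0 := (hr0.trans hx).ne'
  have hx0 : x ≠ 0 := norm_ne_zero_iff.1 hs0
  have hb : ∀ᶠ t in 𝓝 ‖x‖, HasDerivAt (jangB n r0) (jangSlope n r0 t) t := by
    filter_upwards [Ioi_mem_nhds hx] with t ht using hasDerivAt_jangB hn hr0 ht
  have hp' : p = fun k => g / ‖x‖ * x k :=
    funext fun k => (hp k).trans (pder_comp_norm hx0 hb.self_of_nhds k)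
  have hH' : H = fun i j => (deriv (jangSlope n r0) ‖x‖ / ‖x‖ ^ 2 - g / ‖x‖ ^ 3) * x i * x j
      + g / ‖x‖ * (if i = j then 1 else 0) :=
    funext₂ fun i j => (hH i j).trans (pder_pder_comp_norm hx0 hb
      (differentiableAt_jangSlope (by omega) hr0 hx).hasDerivAt i j)
  have hgrad : ∑ k, p k ^ 2 = g ^ 2 := by
    simp only [hp', mul_pow, ← Finset.mul_sum, ← EuclideanSpace.real_norm_sq_eq]
    field_simp
  rw [hgrad, hH', hp']
  beta_reduce
  rw [sum_graphInvMetric_mul_radial_hessian x hs0 (EuclideanSpace.real_norm_sq_eq x).symm,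
    ← jangSlope_mean_curvature (by omega) hr0 hx, rpow_neg (by positivity), ← sqrt_eq_rpow]
  field_simp
  ring

theorem barrier_strict_supersolution_general (n : ℕ) (hn : 4 ≤ n) (r0 : ℝ) (hr0 : 0 < r0)
    (q : EuclideanSpace ℝ (Fin n) → Matrix (Fin n) (Fin n) ℝ)
    (hq_bound : ∀ x : EuclideanSpace ℝ (Fin n), r0 < ‖x‖ →
      (n : ℝ) * Real.sqrt (∑ i, ∑ j, (q x i j) ^ 2)
        < r0 ^ ((n : ℝ) - 2) * ‖x‖ ^ ((1 : ℝ) - n))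
    (lam : ℝ) (hlam : |lam| ≤ 1)
    (x : EuclideanSpace ℝ (Fin n)) (hx : r0 < ‖x‖)
    (p : Fin n → ℝ) (hp : ∀ i, p i = pder (fun y => jangB n r0 ‖y‖) i x)
    (H : Fin n → Fin n → ℝ)
    (hH : ∀ i j, H i j = pder (pder (fun y => jangB n r0 ‖y‖) j) i x) :
    ∑ i, ∑ j,
        ((if i = j then (1 : ℝ) else 0) - (1 + ∑ k, p k ^ 2)⁻¹ * p i * p j)
          * ((1 + ∑ k, p k ^ 2) ^ (-(1 / 2) : ℝ) * H i j - lam * q x i j)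
      < 0 := by
  set c := (1 + ∑ k, p k ^ 2) ^ (-(1 / 2) : ℝ)
  have hsplit : ∑ i, ∑ j, graphInvMetric p i j * (c * H i j - lam * q x i j)
      = c * ∑ i, ∑ j, graphInvMetric p i j * H i j
        - lam * ∑ i, ∑ j, graphInvMetric p i j * q x i j := by
    simp only [mul_sub, Finset.sum_sub_distrib, Finset.mul_sum, mul_left_comm c,
      mul_left_comm lam]
  have hdata : |lam * ∑ i, ∑ j, graphInvMetric p i j * q x i j|
      < r0 ^ ((n : ℝ) - 2) * ‖x‖ ^ ((1 : ℝ) - n) := by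
    have hn1 : (1 : ℝ) ≤ n := by exact_mod_cast (by omega : 1 ≤ n)
    calc |lam * ∑ i, ∑ j, graphInvMetric p i j * q x i j|
        = |lam| * |∑ i, ∑ j, graphInvMetric p i j * q x i j| := abs_mul _ _
      _ ≤ √n * √(∑ i, ∑ j, q x i j ^ 2) :=
          mul_le_of_le_one_left (abs_nonneg _) hlam |>.trans (abs_sum_graphInvMetric_mul_le p (q x))
      _ ≤ n * √(∑ i, ∑ j, q x i j ^ 2) := by gcongr; exact sqrt_le_self_iff.2 (.inr hn1)
      _ < _ := hq_bound x hx
  change ∑ i, ∑ j, graphInvMetric p i j * (c * H i j - lam * q x i j) < 0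
  rw [hsplit, barrier_graph_mean_curvature hn hr0 hx hp hH]
  linarith [neg_abs_le (lam * ∑ i, ∑ j, graphInvMetric p i j * q x i j),
    rpow_pos_of_pos hr0 ((n : ℝ) - 2)]

/-- Euclidean version of Proposition `barrier`: let `Υ(x) = b(‖x‖)`
on `{‖x‖ > r0}` and let `q` assign to each such `x` a symmetric matrix with
`n · ‖q(x)‖_F < r0^{n-2} ‖x‖^{1-n}`. Then for every `λ` with `|λ| ≤ 1`,
`∑_{i,j} (δ_{ij} - (1+‖p‖²)⁻¹ p_i p_j) ((1+‖p‖²)^{-1/2} H_{ij} - λ q(x)_{ij}) < 0`,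
where `p` is the gradient and `H` the Hessian of `Υ` at `x`; i.e. `Υ` is a strict
supersolution of the Jang equation with data `±q` on `{‖x‖ > r0}`. -/
theorem barrier_strict_supersolution (n : ℕ) (hn : 4 ≤ n) (r0 : ℝ) (hr0 : 0 < r0)
    (q : EuclideanSpace ℝ (Fin n) → Matrix (Fin n) (Fin n) ℝ)
    (hq_symm : ∀ x : EuclideanSpace ℝ (Fin n), r0 < ‖x‖ → (q x).IsSymm)
    (hq_bound : ∀ x : EuclideanSpace ℝ (Fin n), r0 < ‖x‖ →
      (n : ℝ) * Real.sqrt (∑ i, ∑ j, (q x i j) ^ 2)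
        < r0 ^ ((n : ℝ) - 2) * ‖x‖ ^ ((1 : ℝ) - n))
    (lam : ℝ) (hlam : |lam| ≤ 1)
    (x : EuclideanSpace ℝ (Fin n)) (hx : r0 < ‖x‖)
    (p : Fin n → ℝ) (hp : ∀ i, p i = pder (fun y => jangB n r0 ‖y‖) i x)
    (H : Fin n → Fin n → ℝ)
    (hH : ∀ i j, H i j = pder (pder (fun y => jangB n r0 ‖y‖) j) i x) :
    ∑ i, ∑ j,
        ((if i = j then (1 : ℝ) else 0) - (1 + ∑ k, p k ^ 2)⁻¹ * p i * p j)
          * ((1 + ∑ k, p k ^ 2) ^ (-(1 / 2) : ℝ) * H i j - lam * q x i j)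
      < 0 :=
  barrier_strict_supersolution_general n hn r0 hr0 q hq_bound lam hlam x hx p hp H hH
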